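/- The N-dimensional Dunkl realization Ĵ₊ = π̂² + Σᵢ (βᵢ + γᵢ R̂ᵢ)/x̂ᵢ², Ĵ₋ = x̂², Ĵ₃ = x̂·π̂ − iℏ(N/2 + Σᵢ μᵢ R̂ᵢ) satisfies the sl(2,ℝ) relations [Ĵ₋, Ĵ₊] = 4iℏ Ĵ₃ and [Ĵ₃, Ĵ±] = ±2iℏ Ĵ±. -/

import Mathlib

open Complex BigOperators Finset

noncomputable section

variable {N : ℕ}

/-- Reflection of the `i`-th coordinate: `σᵢ(x)` flips the sign of `xᵢ`. -/
def flipC (i : Fin N) (x : Fin N → ℝ) : Fin N → ℝ := Function.update x i (-(x i))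

/-- The reflection operator `R̂ᵢ f (x) = f (σᵢ x)`. -/
def Rop (i : Fin N) (f : (Fin N → ℝ) → ℂ) : (Fin N → ℝ) → ℂ := fun x => f (flipC i x)

/-- The Dunkl derivative `Dᵢ f (x) = ∂ᵢ f(x) + (μᵢ/xᵢ)(f(x) - f(σᵢ x))`. -/
def Dop (μ : Fin N → ℝ) (i : Fin N) (f : (Fin N → ℝ) → ℂ) : (Fin N → ℝ) → ℂ :=
  fun x => fderiv ℝ f x (Pi.single i 1) + ((μ i : ℂ) / (x i : ℂ)) * (f x - f (flipC i x))

/-- The Dunkl momentum operator `π̂ᵢ = -iℏ Dᵢ`. -/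
def Pop (μ : Fin N → ℝ) (hb : ℝ) (i : Fin N) (f : (Fin N → ℝ) → ℂ) : (Fin N → ℝ) → ℂ :=
  fun x => -(Complex.I * (hb : ℂ)) * Dop μ i f x

/-- The Dunkl angular momentum operator `Λ̂ᵢⱼ = x̂ᵢ π̂ⱼ - x̂ⱼ π̂ᵢ`. -/
def Lam (μ : Fin N → ℝ) (hb : ℝ) (i j : Fin N) (f : (Fin N → ℝ) → ℂ) : (Fin N → ℝ) → ℂ :=
  fun x => (x i : ℂ) * Pop μ hb j f x - (x j : ℂ) * Pop μ hb i f x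

/-- The complement of the coordinate hyperplanes in `ℝ^N`. -/
def Udom (N : ℕ) : Set (Fin N → ℝ) := {x | ∀ i, x i ≠ 0}

/-- `Ĵ₊ = π̂² + Σᵢ (βᵢ + γᵢ R̂ᵢ)/x̂ᵢ²`. -/
def JpN (μ β γ : Fin N → ℝ) (hb : ℝ) (f : (Fin N → ℝ) → ℂ) : (Fin N → ℝ) → ℂ :=
  fun x => (∑ i, Pop μ hb i (Pop μ hb i f) x)
    + ∑ i, ((β i : ℂ) * f x + (γ i : ℂ) * Rop i f x) / (x i : ℂ) ^ 2

/-- `Ĵ₋ = x̂²`. -/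
def JmN (f : (Fin N → ℝ) → ℂ) : (Fin N → ℝ) → ℂ :=
  fun x => (∑ i, (x i : ℂ) ^ 2) * f x

/-- `Ĵ₃ = x̂·π̂ - iℏ(N/2 + Σᵢ μᵢ R̂ᵢ)`. -/
def J3N (μ : Fin N → ℝ) (hb : ℝ) (f : (Fin N → ℝ) → ℂ) : (Fin N → ℝ) → ℂ :=
  fun x => (∑ i, (x i : ℂ) * Pop μ hb i f x)
    - Complex.I * (hb : ℂ) * ((N : ℂ) / 2 * f x + ∑ i, (μ i : ℂ) * Rop i f x)

-- ## basic flip lemmas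

@[simp] lemma flipC_self (i : Fin N) (x : Fin N → ℝ) : flipC i x i = -(x i) := by
  simp [flipC]

lemma flipC_other {i j : Fin N} (h : j ≠ i) (x : Fin N → ℝ) : flipC i x j = x j := by
  simp [flipC, Function.update_of_ne h]

@[simp] lemma flipC_flipC (i : Fin N) (x : Fin N → ℝ) : flipC i (flipC i x) = x := by
  funext j
  rcases eq_or_ne j i with rfl | h
  · simp
  · rw [flipC_other h, flipC_other h]

lemma flipC_comm (i j : Fin N) (x : Fin N → ℝ) : flipC i (flipC j x) = flipC j (flipC i x) := by
  rcases eq_or_ne i j with rfl | hij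
  · rfl
  funext k
  rcases eq_or_ne k i with rfl | hki
  · rw [flipC_self, flipC_other hij, flipC_other hij, flipC_self]
  rcases eq_or_ne k j with rfl | hkj
  · rw [flipC_other hki, flipC_self, flipC_self, flipC_other hki]
  · rw [flipC_other hki, flipC_other hkj, flipC_other hkj, flipC_other hki]

lemma flipC_mem_Udom {i : Fin N} {x : Fin N → ℝ} (hx : x ∈ Udom N) : flipC i x ∈ Udom N := by
  intro j
  rcases eq_or_ne j i with rfl | h
  · simpa using hx j
  · rw [flipC_other h]; exact hx j

lemma isOpen_Udom : IsOpen (Udom N) := by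
  have : Udom N = ⋂ i, (fun x : Fin N → ℝ => x i) ⁻¹' {0}ᶜ := by
    ext x; simp [Udom]
  rw [this]
  exact isOpen_iInter_of_finite fun i =>
    (isOpen_compl_singleton).preimage (continuous_apply i)

-- flip as a continuous linear map
def flipL (i : Fin N) : (Fin N → ℝ) →L[ℝ] (Fin N → ℝ) :=
  ContinuousLinearMap.pi fun j =>
    if j = i then -(ContinuousLinearMap.proj i) else ContinuousLinearMap.proj j

lemma flipL_apply (i : Fin N) (x : Fin N → ℝ) : flipL i x = flipC i x := by
  funext j
  rcases eq_or_ne j i with rfl | h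
  · simp [flipL, ContinuousLinearMap.pi_apply]
  · simp [flipL, ContinuousLinearMap.pi_apply, h, flipC_other h]

lemma flipL_eq (i : Fin N) : ⇑(flipL i) = flipC i := funext (flipL_apply i)

lemma flipL_single_self (i : Fin N) : flipL i (Pi.single i (1:ℝ)) = -(Pi.single i 1) := by
  rw [flipL_apply]
  funext j
  rcases eq_or_ne j i with rfl | h
  · simp
  · rw [flipC_other h]; simp [Pi.single_eq_of_ne h]

lemma flipL_single_other {i j : Fin N} (h : j ≠ i) :
    flipL i (Pi.single j (1:ℝ)) = Pi.single j 1 := by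
  rw [flipL_apply]
  funext k
  rcases eq_or_ne k i with rfl | hk
  · rw [flipC_self]; simp [Pi.single_eq_of_ne (Ne.symm h), Pi.single_eq_of_ne (Ne.symm h)]
  · rw [flipC_other hk]

-- coordinate as CLM into ℂ
def coordC (j : Fin N) : (Fin N → ℝ) →L[ℝ] ℂ :=
  Complex.ofRealCLM.comp (ContinuousLinearMap.proj j)

@[simp] lemma coordC_apply (j : Fin N) (x : Fin N → ℝ) : coordC j x = (x j : ℂ) := rfl

lemma coordC_single (j i : Fin N) :
    coordC j (Pi.single i (1:ℝ)) = if j = i then 1 else 0 := by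
  rcases eq_or_ne j i with rfl | h
  · simp [coordC]
  · simp [coordC, Pi.single_eq_of_ne h, h]

-- ## smoothness bookkeeping

/-- `Sm g` means `g` is `C^∞` on `Udom N`. -/
def Sm (g : (Fin N → ℝ) → ℂ) : Prop := ContDiffOn ℝ (⊤ : ℕ∞) g (Udom N)

namespace Sm

variable {g h : (Fin N → ℝ) → ℂ}

lemma smAt (hg : Sm g) {x : Fin N → ℝ} (hx : x ∈ Udom N) :
    ContDiffAt ℝ (⊤ : ℕ∞) g x :=
  ContDiffOn.contDiffAt hg (isOpen_Udom.mem_nhds hx)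

lemma diffAt (hg : Sm g) {x : Fin N → ℝ} (hx : x ∈ Udom N) :
    DifferentiableAt ℝ g x :=
  (hg.smAt hx).differentiableAt (by simp)

lemma add (hg : Sm g) (hh : Sm h) : Sm (fun y => g y + h y) := ContDiffOn.add hg hh

lemma sub (hg : Sm g) (hh : Sm h) : Sm (fun y => g y - h y) := ContDiffOn.sub hg hh

lemma mul (hg : Sm g) (hh : Sm h) : Sm (fun y => g y * h y) := ContDiffOn.mul hg hh

lemma const_mul (hg : Sm g) (c : ℂ) : Sm (fun y => c * g y) :=
  ContDiffOn.mul contDiffOn_const hg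

lemma const (c : ℂ) : Sm (fun _ : Fin N → ℝ => c) := contDiffOn_const

lemma sum {s : Finset (Fin N)} {F : Fin N → (Fin N → ℝ) → ℂ}
    (hF : ∀ j ∈ s, Sm (F j)) : Sm (fun y => ∑ j ∈ s, F j y) :=
  ContDiffOn.sum hF

lemma flip (hg : Sm g) (i : Fin N) : Sm (fun y => g (flipC i y)) := by
  have h2 : Sm (g ∘ flipC i) := by
    rw [← flipL_eq]
    exact ContDiffOn.comp hg ((flipL i).contDiff.contDiffOn)
      (fun y hy => by rw [flipL_eq]; exact flipC_mem_Udom hy)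
  exact h2

lemma coord (j : Fin N) : Sm (fun y : Fin N → ℝ => ((y j : ℝ) : ℂ)) :=
  ((coordC j).contDiff.contDiffOn)

lemma coord_ne {j : Fin N} {x : Fin N → ℝ} (hx : x ∈ Udom N) : ((x j : ℝ) : ℂ) ≠ 0 := by
  simpa using hx j

lemma inv_coord (j : Fin N) : Sm (fun y : Fin N → ℝ => ((y j : ℝ) : ℂ)⁻¹) :=
  ContDiffOn.inv (coord j) (fun _ hx => coord_ne hx)

lemma pdFun (hg : Sm g) (v : Fin N → ℝ) : Sm (fun y => fderiv ℝ g y v) := by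
  have h1 : ContDiffOn ℝ (⊤ : ℕ∞) (fderiv ℝ g) (Udom N) :=
    ((contDiffOn_infty_iff_fderiv_of_isOpen isOpen_Udom).1 hg).2
  exact (ContinuousLinearMap.apply ℝ ℂ v).contDiff.comp_contDiffOn h1

lemma dop (hg : Sm g) (μ : Fin N → ℝ) (i : Fin N) : Sm (Dop μ i g) := by
  have h2 : Sm (fun y : Fin N → ℝ => ((μ i : ℝ) : ℂ) / ((y i : ℝ) : ℂ)) := by
    simp only [div_eq_mul_inv]
    exact (inv_coord i).const_mul _
  exact Sm.add (hg.pdFun _) (Sm.mul h2 (Sm.sub hg (hg.flip i)))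

end Sm
-- ## directional derivative lemmas

/-- Directional derivative along the `i`-th coordinate. -/
def pd (i : Fin N) (g : (Fin N → ℝ) → ℂ) (x : Fin N → ℝ) : ℂ :=
  fderiv ℝ g x (Pi.single i 1)

variable {g h : (Fin N → ℝ) → ℂ} {x : Fin N → ℝ} {i j : Fin N}

lemma pd_congr (hgh : g =ᶠ[nhds x] h) : pd i g x = pd i h x := by
  unfold pd; rw [Filter.EventuallyEq.fderiv_eq hgh]

lemma pd_add (hg : DifferentiableAt ℝ g x) (hh : DifferentiableAt ℝ h x) :
    pd i (fun y => g y + h y) x = pd i g x + pd i h x := by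
  unfold pd; rw [fderiv_fun_add hg hh]; rfl

lemma pd_sub (hg : DifferentiableAt ℝ g x) (hh : DifferentiableAt ℝ h x) :
    pd i (fun y => g y - h y) x = pd i g x - pd i h x := by
  unfold pd; rw [fderiv_fun_sub hg hh]; rfl

lemma pd_const (c : ℂ) : pd i (fun _ => c) x = 0 := by
  unfold pd; rw [fderiv_fun_const]; rfl

lemma pd_mul (hg : DifferentiableAt ℝ g x) (hh : DifferentiableAt ℝ h x) :
    pd i (fun y => g y * h y) x = g x * pd i h x + h x * pd i g x := by
  unfold pd; rw [fderiv_fun_mul hg hh]; simp [smul_eq_mul]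

lemma pd_const_mul (hg : DifferentiableAt ℝ g x) (c : ℂ) :
    pd i (fun y => c * g y) x = c * pd i g x := by
  unfold pd; rw [fderiv_const_mul hg]; simp [smul_eq_mul]

lemma pd_sum {s : Finset (Fin N)} {F : Fin N → (Fin N → ℝ) → ℂ}
    (hF : ∀ j ∈ s, DifferentiableAt ℝ (F j) x) :
    pd i (fun y => ∑ j ∈ s, F j y) x = ∑ j ∈ s, pd i (F j) x := by
  unfold pd; rw [fderiv_fun_sum hF]; simp

lemma pd_coord : pd i (fun y : Fin N → ℝ => ((y j : ℝ) : ℂ)) x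
    = if j = i then 1 else 0 := by
  unfold pd
  rw [show (fun y : Fin N → ℝ => ((y j : ℝ) : ℂ)) = ⇑(coordC j) from rfl,
    ContinuousLinearMap.fderiv]
  exact coordC_single j i

lemma pd_inv_coord (hxj : x j ≠ 0) :
    pd i (fun y : Fin N → ℝ => ((y j : ℝ) : ℂ)⁻¹) x
      = -(if j = i then 1 else 0) / ((x j : ℝ) : ℂ) ^ 2 := by
  have hc : ((x j : ℝ) : ℂ) ≠ 0 := by simpa using hxj
  have h1 : HasFDerivAt (fun y : Fin N → ℝ => ((y j : ℝ) : ℂ)⁻¹)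
      ((-ContinuousLinearMap.mulLeftRight ℝ ℂ (((x j : ℝ) : ℂ))⁻¹ (((x j : ℝ) : ℂ))⁻¹).comp
        (coordC j)) x := by
    exact (hasFDerivAt_inv' (𝕜 := ℝ) hc).comp x (coordC j).hasFDerivAt
  unfold pd
  rw [h1.fderiv]
  simp only [ContinuousLinearMap.coe_comp', Function.comp_apply, coordC_single,
    ContinuousLinearMap.neg_apply, ContinuousLinearMap.mulLeftRight_apply]
  field_simp

lemma pd_flip (hg : DifferentiableAt ℝ g (flipC j x)) :
    pd i (fun y => g (flipC j y)) x
      = (if j = i then -1 else 1) * pd i g (flipC j x) := by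
  have h0 : HasFDerivAt (flipC j) (flipL j) x := by
    rw [← flipL_eq]; exact (flipL j).hasFDerivAt
  have h1 : HasFDerivAt (fun y => g (flipC j y))
      ((fderiv ℝ g (flipC j x)).comp (flipL j)) x := hg.hasFDerivAt.comp x h0
  unfold pd
  rw [h1.fderiv]
  rcases eq_or_ne j i with rfl | hji
  · simp [ContinuousLinearMap.comp_apply, flipL_single_self]
  · simp [ContinuousLinearMap.comp_apply, flipL_single_other (Ne.symm hji), hji]

lemma diffAt_fderiv (hg : Sm g) (hx : x ∈ Udom N) :
    DifferentiableAt ℝ (fderiv ℝ g) x := by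
  have h1 : ContDiffOn ℝ (⊤ : ℕ∞) (fderiv ℝ g) (Udom N) :=
    ((contDiffOn_infty_iff_fderiv_of_isOpen isOpen_Udom).1 hg).2
  exact (h1.contDiffAt (isOpen_Udom.mem_nhds hx)).differentiableAt (by simp)

lemma pd_pd (hg : Sm g) (hx : x ∈ Udom N) :
    pd i (fun y => pd j g y) x
      = fderiv ℝ (fderiv ℝ g) x (Pi.single i 1) (Pi.single j 1) := by
  unfold pd
  rw [fderiv_clm_apply (diffAt_fderiv hg hx) (differentiableAt_const _)]
  simp

lemma pd_comm (hg : Sm g) (hx : x ∈ Udom N) :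
    pd i (fun y => pd j g y) x = pd j (fun y => pd i g y) x := by
  rw [pd_pd hg hx, pd_pd hg hx]
  exact (hg.smAt hx).isSymmSndFDerivAt (by rw [minSmoothness_of_isRCLikeNormedField]; exact WithTop.coe_le_coe.2 (le_top : (2:ℕ∞) ≤ ⊤)) _ _
-- ## Dop calculus

variable {μ : Fin N → ℝ} {φ : (Fin N → ℝ) → ℂ}

lemma Dop_def (μ : Fin N → ℝ) (i : Fin N) (g : (Fin N → ℝ) → ℂ) (x : Fin N → ℝ) :
    Dop μ i g x = pd i g x + ((μ i : ℂ) / ((x i : ℝ) : ℂ)) * (g x - g (flipC i x)) := rfl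

lemma Dop_congr (hgh : ∀ y ∈ Udom N, g y = h y) (hx : x ∈ Udom N) :
    Dop μ i g x = Dop μ i h x := by
  rw [Dop_def, Dop_def, pd_congr
    (Filter.eventuallyEq_of_mem (isOpen_Udom.mem_nhds hx) hgh),
    hgh x hx, hgh _ (flipC_mem_Udom hx)]

lemma Dop_add (hg : DifferentiableAt ℝ g x) (hh : DifferentiableAt ℝ h x) :
    Dop μ i (fun y => g y + h y) x = Dop μ i g x + Dop μ i h x := by
  rw [Dop_def, Dop_def, Dop_def, pd_add hg hh]; ring

lemma Dop_sub (hg : DifferentiableAt ℝ g x) (hh : DifferentiableAt ℝ h x) :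
    Dop μ i (fun y => g y - h y) x = Dop μ i g x - Dop μ i h x := by
  rw [Dop_def, Dop_def, Dop_def, pd_sub hg hh]; ring

lemma Dop_const_mul (hg : DifferentiableAt ℝ g x) (c : ℂ) :
    Dop μ i (fun y => c * g y) x = c * Dop μ i g x := by
  rw [Dop_def, Dop_def, pd_const_mul hg c]; ring

lemma Dop_sum {s : Finset (Fin N)} {F : Fin N → (Fin N → ℝ) → ℂ}
    (hF : ∀ j ∈ s, DifferentiableAt ℝ (F j) x) :
    Dop μ i (fun y => ∑ j ∈ s, F j y) x = ∑ j ∈ s, Dop μ i (F j) x := by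
  simp only [Dop_def, pd_sum hF]
  rw [Finset.sum_add_distrib, ← Finset.sum_sub_distrib, Finset.mul_sum]

lemma Dop_mul (hφ : DifferentiableAt ℝ φ x) (hg : DifferentiableAt ℝ g x) :
    Dop μ i (fun y => φ y * g y) x
      = φ x * Dop μ i g x + pd i φ x * g x
        + (μ i : ℂ) / ((x i : ℝ) : ℂ) * (φ x - φ (flipC i x)) * g (flipC i x) := by
  rw [Dop_def, Dop_def, pd_mul hφ hg]; ring

lemma diffAt_coord (j : Fin N) (x : Fin N → ℝ) :
    DifferentiableAt ℝ (fun y : Fin N → ℝ => ((y j : ℝ) : ℂ)) x :=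
  (coordC j).differentiableAt

/-- `Dᵢ(yⱼ g) = xⱼ Dᵢ g + δᵢⱼ (g + 2 μᵢ Rᵢ g)`. -/
lemma Dop_coord_mul (hg : DifferentiableAt ℝ g x) (hx : x ∈ Udom N) (j : Fin N) :
    Dop μ i (fun y => ((y j : ℝ) : ℂ) * g y) x
      = ((x j : ℝ) : ℂ) * Dop μ i g x
        + (if j = i then g x + 2 * (μ i : ℂ) * g (flipC i x) else 0) := by
  rw [Dop_mul (diffAt_coord j x) hg, pd_coord]
  rcases eq_or_ne j i with rfl | hji
  · have h0 : ((x j : ℝ) : ℂ) ≠ 0 := Sm.coord_ne hx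
    simp only [if_pos rfl, flipC_self, Complex.ofReal_neg, if_true]
    field_simp
    ring
  · rw [flipC_other hji]
    simp [hji]

/-- `Dᵢ(r² g) = r² Dᵢ g + 2 xᵢ g`. -/
lemma Dop_r2_mul (hg : DifferentiableAt ℝ g x) :
    Dop μ i (fun y => (∑ j, ((y j : ℝ) : ℂ) ^ 2) * g y) x
      = (∑ j, ((x j : ℝ) : ℂ) ^ 2) * Dop μ i g x + 2 * ((x i : ℝ) : ℂ) * g x := by
  have hφ : DifferentiableAt ℝ (fun y : Fin N → ℝ => ∑ j, ((y j : ℝ) : ℂ) ^ 2) x := by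
    exact DifferentiableAt.fun_sum (fun j _ => (diffAt_coord j x).fun_pow 2)
  rw [Dop_mul hφ hg]
  have h1 : pd i (fun y : Fin N → ℝ => ∑ j, ((y j : ℝ) : ℂ) ^ 2) x = 2 * ((x i : ℝ) : ℂ) := by
    rw [pd_sum (fun j _ => (diffAt_coord j x).fun_pow 2)]
    have h2 : ∀ j : Fin N, pd i (fun y : Fin N → ℝ => ((y j : ℝ) : ℂ) ^ 2) x
        = if j = i then 2 * ((x i : ℝ) : ℂ) else 0 := by
      intro j
      have := pd_mul (x := x) (i := i) (diffAt_coord j x) (diffAt_coord j x)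
      simp only [← sq] at this
      rw [this, pd_coord]
      rcases eq_or_ne j i with rfl | hji
      · simp; ring
      · simp [hji]
    simp [h2]
  have h3 : (∑ j, ((flipC i x j : ℝ) : ℂ) ^ 2) = ∑ j, ((x j : ℝ) : ℂ) ^ 2 := by
    apply Finset.sum_congr rfl
    intro j _
    rcases eq_or_ne j i with rfl | hji
    · simp
    · rw [flipC_other hji]
  rw [h1, h3]
  ring

/-- `Dᵢ(g / yⱼ²) = (Dᵢ g)/xⱼ² - 2 δᵢⱼ g/xᵢ³`. -/
lemma Dop_div_sq (hg : DifferentiableAt ℝ g x) (hx : x ∈ Udom N) (j : Fin N) :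
    Dop μ i (fun y => g y / ((y j : ℝ) : ℂ) ^ 2) x
      = Dop μ i g x / ((x j : ℝ) : ℂ) ^ 2
        - (if j = i then 2 * g x / ((x j : ℝ) : ℂ) ^ 3 else 0) := by
  have hxj : ((x j : ℝ) : ℂ) ≠ 0 := Sm.coord_ne hx
  have hφd : DifferentiableAt ℝ (fun y : Fin N → ℝ => (((y j : ℝ) : ℂ) ^ 2)⁻¹) x := by
    exact (((diffAt_coord j x)).pow 2).inv (pow_ne_zero 2 (Sm.coord_ne hx))
  have e1 : Dop μ i (fun y => g y / ((y j : ℝ) : ℂ) ^ 2) x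
      = Dop μ i (fun y => (((y j : ℝ) : ℂ) ^ 2)⁻¹ * g y) x := by
    apply Dop_congr (fun y _ => by rw [div_eq_inv_mul]) hx
  rw [e1, Dop_mul hφd hg]
  have h2 : pd i (fun y : Fin N → ℝ => (((y j : ℝ) : ℂ) ^ 2)⁻¹) x
      = -(if j = i then 2 / ((x j : ℝ) : ℂ) ^ 3 else 0) := by
    have e2 : pd i (fun y : Fin N → ℝ => (((y j : ℝ) : ℂ) ^ 2)⁻¹) x
        = pd i (fun y : Fin N → ℝ => ((y j : ℝ) : ℂ)⁻¹ * ((y j : ℝ) : ℂ)⁻¹) x := by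
      apply pd_congr
      filter_upwards with y
      rw [sq, mul_inv]
    rw [e2, pd_mul ((diffAt_coord j x).fun_inv (Sm.coord_ne hx))
      ((diffAt_coord j x).fun_inv (Sm.coord_ne hx)),
      pd_inv_coord (hx j)]
    rcases eq_or_ne j i with rfl | hji
    · simp only [if_pos rfl, if_true]
      field_simp
      ring
    · simp [hji]
  have h3 : ((flipC i x j : ℝ) : ℂ) ^ 2 = ((x j : ℝ) : ℂ) ^ 2 := by
    rcases eq_or_ne j i with rfl | hji
    · simp
    · rw [flipC_other hji]
  rw [h2, h3]
  field_simp
  split_ifs <;> ring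
-- ## Dop and reflections

/-- `Dᵢ Rᵢ = - Rᵢ Dᵢ`. -/
lemma Dop_flip_self (hg : Sm g) (hx : x ∈ Udom N) :
    Dop μ i (fun y => g (flipC i y)) x = -(Dop μ i g (flipC i x)) := by
  rw [Dop_def, Dop_def, pd_flip (hg.diffAt (flipC_mem_Udom hx)), flipC_flipC]
  simp only [if_pos rfl, flipC_self, Complex.ofReal_neg, if_true]
  have h0 : ((x i : ℝ) : ℂ) ≠ 0 := Sm.coord_ne hx
  field_simp
  ring

/-- `Dᵢ Rⱼ = Rⱼ Dᵢ` for `i ≠ j`. -/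
lemma Dop_flip_other (hg : Sm g) (hx : x ∈ Udom N) (hij : i ≠ j) :
    Dop μ i (fun y => g (flipC j y)) x = Dop μ i g (flipC j x) := by
  rw [Dop_def, Dop_def, pd_flip (hg.diffAt (flipC_mem_Udom hx)),
    if_neg (Ne.symm hij), one_mul, flipC_other hij, flipC_comm i j]

/-- Dunkl operators commute: `Dᵢ Dⱼ = Dⱼ Dᵢ` for `i ≠ j`. -/
lemma Dop_comm (hg : Sm g) (hx : x ∈ Udom N) (hij : i ≠ j) :
    Dop μ i (Dop μ j g) x = Dop μ j (Dop μ i g) x := by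
  have key : ∀ (i j : Fin N), i ≠ j → Dop μ i (Dop μ j g) x
      = fderiv ℝ (fderiv ℝ g) x (Pi.single i 1) (Pi.single j 1)
        + ((μ j : ℂ) / ((x j : ℝ) : ℂ)) * (pd i g x - pd i g (flipC j x))
        + ((μ i : ℂ) / ((x i : ℝ) : ℂ)) *
            ((pd j g x + ((μ j : ℂ) / ((x j : ℝ) : ℂ)) * (g x - g (flipC j x)))
            - (pd j g (flipC i x)
              + ((μ j : ℂ) / ((x j : ℝ) : ℂ)) * (g (flipC i x) - g (flipC j (flipC i x))))) := by
    intro i j hij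
    have hxi : flipC i x ∈ Udom N := flipC_mem_Udom hx
    -- expand the inner Dop as a sum of explicit functions
    have e1 : Dop μ i (Dop μ j g) x
        = pd i (Dop μ j g) x
          + ((μ i : ℂ) / ((x i : ℝ) : ℂ)) * (Dop μ j g x - Dop μ j g (flipC i x)) := rfl
    have hjx : Dop μ j g x
        = pd j g x + ((μ j : ℂ) / ((x j : ℝ) : ℂ)) * (g x - g (flipC j x)) := rfl
    have hjxi : Dop μ j g (flipC i x)
        = pd j g (flipC i x)
          + ((μ j : ℂ) / ((x j : ℝ) : ℂ)) * (g (flipC i x) - g (flipC j (flipC i x))) := by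
      rw [Dop_def, flipC_other (Ne.symm hij)]
    have e2 : pd i (Dop μ j g) x
        = fderiv ℝ (fderiv ℝ g) x (Pi.single i 1) (Pi.single j 1)
          + ((μ j : ℂ) / ((x j : ℝ) : ℂ)) * (pd i g x - pd i g (flipC j x)) := by
      have e3 : pd i (Dop μ j g) x
          = pd i (fun y => pd j g y) x
            + pd i (fun y => ((μ j : ℂ) * ((y j : ℝ) : ℂ)⁻¹) * (g y - g (flipC j y))) x := by
        apply Eq.trans (b := pd i (fun y => pd j g y
          + ((μ j : ℂ) * ((y j : ℝ) : ℂ)⁻¹) * (g y - g (flipC j y))) x)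
        · apply pd_congr
          filter_upwards with y
          rw [Dop_def, div_eq_mul_inv]
        · exact pd_add ((hg.pdFun _).diffAt hx)
            ((((diffAt_coord j x).fun_inv (Sm.coord_ne hx)).const_mul _).mul
              ((hg.diffAt hx).sub ((hg.flip j).diffAt hx)))
      rw [e3, pd_pd hg hx,
        pd_mul (((diffAt_coord j x).fun_inv (Sm.coord_ne hx)).const_mul _)
          ((hg.diffAt hx).fun_sub ((hg.flip j).diffAt hx)),
        pd_const_mul ((diffAt_coord j x).fun_inv (Sm.coord_ne hx)) _,
        pd_inv_coord (hx j),
        pd_sub (hg.diffAt hx) ((hg.flip j).diffAt hx),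
        pd_flip (hg.diffAt (flipC_mem_Udom hx)),
        if_neg (Ne.symm hij), if_neg (Ne.symm hij), div_eq_mul_inv]
      ring
    rw [e1, e2, hjx, hjxi]
  rw [key i j hij, key j i (Ne.symm hij)]
  have hsymm : fderiv ℝ (fderiv ℝ g) x (Pi.single i 1) (Pi.single j 1)
      = fderiv ℝ (fderiv ℝ g) x (Pi.single j 1) (Pi.single i 1) :=
    (hg.smAt hx).isSymmSndFDerivAt (by rw [minSmoothness_of_isRCLikeNormedField]; exact WithTop.coe_le_coe.2 (le_top : (2:ℕ∞) ≤ ⊤)) _ _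
  rw [hsymm, flipC_comm]
  ring
-- ## the operators in Dop form

variable {hb : ℝ} {f : (Fin N → ℝ) → ℂ} {β γ : Fin N → ℝ}

lemma r2_flip (i : Fin N) (x : Fin N → ℝ) :
    (∑ j, ((flipC i x j : ℝ) : ℂ) ^ 2) = ∑ j, ((x j : ℝ) : ℂ) ^ 2 := by
  apply Finset.sum_congr rfl
  intro j _
  rcases eq_or_ne j i with rfl | hji
  · simp
  · rw [flipC_other hji]

lemma Sm.r2 : Sm (fun y : Fin N → ℝ => ∑ j, ((y j : ℝ) : ℂ) ^ 2) :=
  Sm.sum (fun j _ => by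
    have := (Sm.coord (N := N) j).mul (Sm.coord j)
    simpa [← sq] using this)

lemma Sm.jm (hf : Sm f) : Sm (JmN f) := Sm.r2.mul hf

lemma PopPop (hg : Sm g) (hx : x ∈ Udom N) (μ : Fin N → ℝ) (hb : ℝ) (i : Fin N) :
    Pop μ hb i (Pop μ hb i g) x
      = (Complex.I * (hb : ℂ)) ^ 2 * Dop μ i (Dop μ i g) x := by
  show -(Complex.I * (hb : ℂ)) * Dop μ i (fun y => -(Complex.I * (hb : ℂ)) * Dop μ i g y) x = _
  rw [Dop_const_mul ((hg.dop μ i).diffAt hx)]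
  ring

/-- Second Dunkl derivative of `r² f`. -/
lemma DD_jm (hf : Sm f) (hx : x ∈ Udom N) (μ : Fin N → ℝ) (i : Fin N) :
    Dop μ i (Dop μ i (JmN f)) x
      = (∑ j, ((x j : ℝ) : ℂ) ^ 2) * Dop μ i (Dop μ i f) x
        + 4 * (((x i : ℝ) : ℂ) * Dop μ i f x)
        + 2 * f x + 4 * ((μ i : ℂ) * f (flipC i x)) := by
  have e1 : Dop μ i (Dop μ i (JmN f)) x
      = Dop μ i (fun y => (∑ j, ((y j : ℝ) : ℂ) ^ 2) * Dop μ i f y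
          + 2 * (((y i : ℝ) : ℂ) * f y)) x := by
    apply Dop_congr (fun y hy => ?_) hx
    have h2 := Dop_r2_mul (μ := μ) (i := i) (hf.diffAt hy)
    show Dop μ i (JmN f) y = _
    unfold JmN
    rw [h2]; ring
  rw [e1, Dop_add ((Sm.r2.mul (hf.dop μ i)).diffAt hx)
      ((((Sm.coord i).mul hf).const_mul 2).diffAt hx),
    Dop_r2_mul ((hf.dop μ i).diffAt hx),
    Dop_const_mul (((Sm.coord i).mul hf).diffAt hx),
    Dop_coord_mul (hf.diffAt hx) hx i, if_pos rfl]
  ring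

lemma JpN_apply (hf : Sm f) (hx : x ∈ Udom N) (μ : Fin N → ℝ) :
    JpN μ β γ hb f x
      = (Complex.I * (hb : ℂ)) ^ 2 * ∑ i, Dop μ i (Dop μ i f) x
        + ∑ i, ((β i : ℂ) * f x + (γ i : ℂ) * f (flipC i x)) / ((x i : ℝ) : ℂ) ^ 2 := by
  unfold JpN Rop
  rw [Finset.sum_congr rfl (fun i _ => PopPop hf hx μ hb i), ← Finset.mul_sum]

lemma J3N_apply (μ : Fin N → ℝ) (g : (Fin N → ℝ) → ℂ) (x : Fin N → ℝ) :
    J3N μ hb g x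
      = ∑ i, ((x i : ℝ) : ℂ) * (-(Complex.I * (hb : ℂ)) * Dop μ i g x)
        - Complex.I * (hb : ℂ) * ((N : ℂ) / 2 * g x
          + ∑ i, (μ i : ℂ) * g (flipC i x)) := rfl

/-- Part 1. -/
lemma part1 (μ : Fin N → ℝ) (hf : Sm f) (hx : x ∈ Udom N) :
    JmN (JpN μ β γ hb f) x - JpN μ β γ hb (JmN f) x
      = 4 * Complex.I * (hb : ℂ) * J3N μ hb f x := by
  have hs1 : ∑ i, Pop μ hb i (Pop μ hb i (JmN f)) x
      = (Complex.I * (hb : ℂ)) ^ 2 * ((∑ j, ((x j : ℝ) : ℂ) ^ 2)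
          * (∑ i, Dop μ i (Dop μ i f) x)
        + 4 * ∑ i, (((x i : ℝ) : ℂ) * Dop μ i f x)
        + 2 * (N : ℂ) * f x
        + 4 * ∑ i, ((μ i : ℂ) * f (flipC i x))) := by
    rw [Finset.sum_congr rfl (fun i _ => by rw [PopPop hf.jm hx μ hb i, DD_jm hf hx μ i])]
    simp only [mul_add, Finset.sum_add_distrib, ← Finset.mul_sum, Finset.sum_const,
      Finset.card_univ, Fintype.card_fin, nsmul_eq_mul]
    ring
  have hs2 : ∑ i, ((β i : ℂ) * JmN f x + (γ i : ℂ) * Rop i (JmN f) x) / ((x i : ℝ) : ℂ) ^ 2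
      = (∑ j, ((x j : ℝ) : ℂ) ^ 2)
        * ∑ i, ((β i : ℂ) * f x + (γ i : ℂ) * f (flipC i x)) / ((x i : ℝ) : ℂ) ^ 2 := by
    rw [Finset.mul_sum]
    apply Finset.sum_congr rfl
    intro i _
    have h3 : Rop i (JmN f) x = (∑ j, ((x j : ℝ) : ℂ) ^ 2) * f (flipC i x) := by
      show (∑ j, ((flipC i x j : ℝ) : ℂ) ^ 2) * f (flipC i x) = _
      rw [r2_flip]
    rw [h3]
    show ((β i : ℂ) * ((∑ j, ((x j : ℝ) : ℂ) ^ 2) * f x) + _) / _ = _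
    ring
  have hjm : JmN (JpN μ β γ hb f) x = (∑ j, ((x j : ℝ) : ℂ) ^ 2) * JpN μ β γ hb f x := rfl
  have hjp : JpN μ β γ hb (JmN f) x
      = (∑ i, Pop μ hb i (Pop μ hb i (JmN f)) x)
        + ∑ i, ((β i : ℂ) * JmN f x + (γ i : ℂ) * Rop i (JmN f) x) / ((x i : ℝ) : ℂ) ^ 2 := rfl
  have e3 : ∑ i, ((x i : ℝ) : ℂ) * (-(Complex.I * (hb : ℂ)) * Dop μ i f x)
      = -(Complex.I * (hb : ℂ)) * ∑ i, (((x i : ℝ) : ℂ) * Dop μ i f x) := by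
    rw [Finset.mul_sum]
    exact Finset.sum_congr rfl (fun i _ => by ring)
  rw [hjm, hjp, hs1, hs2, JpN_apply hf hx μ, J3N_apply μ f x, e3]
  ring

/-- Part 3. -/
lemma part3 (μ : Fin N → ℝ) (hf : Sm f) (hx : x ∈ Udom N) :
    J3N μ hb (JmN f) x - JmN (J3N μ hb f) x
      = -(2 * Complex.I * (hb : ℂ)) * JmN f x := by
  have hD : ∀ i : Fin N, Dop μ i (JmN f) x
      = (∑ j, ((x j : ℝ) : ℂ) ^ 2) * Dop μ i f x + 2 * ((x i : ℝ) : ℂ) * f x := by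
    intro i
    exact Dop_r2_mul (hf.diffAt hx)
  have hflip : ∀ i : Fin N, JmN f (flipC i x)
      = (∑ j, ((x j : ℝ) : ℂ) ^ 2) * f (flipC i x) := by
    intro i
    show (∑ j, ((flipC i x j : ℝ) : ℂ) ^ 2) * f (flipC i x) = _
    rw [r2_flip]
  have hjm3 : JmN (J3N μ hb f) x = (∑ j, ((x j : ℝ) : ℂ) ^ 2) * J3N μ hb f x := rfl
  have hjmx : JmN f x = (∑ j, ((x j : ℝ) : ℂ) ^ 2) * f x := rfl
  have e1 : ∑ i, ((x i : ℝ) : ℂ) * (-(Complex.I * (hb : ℂ)) * Dop μ i (JmN f) x)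
      = (∑ j, ((x j : ℝ) : ℂ) ^ 2)
          * ∑ i, ((x i : ℝ) : ℂ) * (-(Complex.I * (hb : ℂ)) * Dop μ i f x)
        - 2 * Complex.I * (hb : ℂ) * ((∑ j, ((x j : ℝ) : ℂ) ^ 2) * f x) := by
    have h4 : ∀ i ∈ Finset.univ, ((x i : ℝ) : ℂ) * (-(Complex.I * (hb : ℂ)) * Dop μ i (JmN f) x)
        = (∑ j, ((x j : ℝ) : ℂ) ^ 2)
            * (((x i : ℝ) : ℂ) * (-(Complex.I * (hb : ℂ)) * Dop μ i f x))
          + (-(2 * Complex.I * (hb : ℂ))) * (((x i : ℝ) : ℂ) ^ 2 * f x) := by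
      intro i _
      rw [hD i]; ring
    rw [Finset.sum_congr rfl h4, Finset.sum_add_distrib, ← Finset.mul_sum, ← Finset.mul_sum,
      ← Finset.sum_mul]
    ring
  have e2 : ∑ i, (μ i : ℂ) * JmN f (flipC i x)
      = (∑ j, ((x j : ℝ) : ℂ) ^ 2) * ∑ i, (μ i : ℂ) * f (flipC i x) := by
    rw [Finset.mul_sum]
    exact Finset.sum_congr rfl (fun i _ => by rw [hflip i]; ring)
  have hrop : ∀ (g : (Fin N → ℝ) → ℂ), (∑ i, (μ i : ℂ) * Rop i g x) = ∑ i, (μ i : ℂ) * g (flipC i x) :=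
    fun g => rfl
  rw [J3N_apply μ (JmN f) x, hjm3, J3N_apply μ f x, e1, e2, hjmx]
  ring
-- ## helpers for part 2

lemma coord_sq_flip (i j : Fin N) (x : Fin N → ℝ) :
    ((flipC i x j : ℝ) : ℂ) ^ 2 = ((x j : ℝ) : ℂ) ^ 2 := by
  rcases eq_or_ne j i with rfl | hji
  · simp
  · rw [flipC_other hji]

/-- Combined flip rule with a sign. -/
lemma Dop_flip_if (hg : Sm g) (hx : x ∈ Udom N) (μ : Fin N → ℝ) (i j : Fin N) :
    Dop μ i (fun y => g (flipC j y)) x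
      = (if i = j then (-1 : ℂ) else 1) * Dop μ i g (flipC j x) := by
  rcases eq_or_ne i j with rfl | hij
  · rw [Dop_flip_self hg hx, if_pos rfl]; ring
  · rw [Dop_flip_other hg hx hij, if_neg hij]; ring

lemma Sm.div_sq (hg : Sm g) (j : Fin N) : Sm (fun y => g y / ((y j : ℝ) : ℂ) ^ 2) := by
  have h1 : Sm (fun y : Fin N → ℝ => g y * (((y j : ℝ) : ℂ)⁻¹ * ((y j : ℝ) : ℂ)⁻¹)) :=
    hg.mul ((Sm.inv_coord j).mul (Sm.inv_coord j))
  have h2 : (fun y => g y / ((y j : ℝ) : ℂ) ^ 2)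
      = fun y : Fin N → ℝ => g y * (((y j : ℝ) : ℂ)⁻¹ * ((y j : ℝ) : ℂ)⁻¹) := by
    funext y
    rw [div_eq_mul_inv, sq, mul_inv]
  rw [h2]
  exact h1

lemma Sm.pop (hf : Sm f) (μ : Fin N → ℝ) (hb : ℝ) (i : Fin N) : Sm (Pop μ hb i f) :=
  (hf.dop μ i).const_mul _

lemma Sm.rop (hf : Sm f) (i : Fin N) : Sm (Rop i f) := hf.flip i

lemma Sm.jp (hf : Sm f) (μ β γ : Fin N → ℝ) (hb : ℝ) : Sm (JpN μ β γ hb f) := by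
  refine Sm.add (Sm.sum fun i _ => ((hf.pop μ hb i).pop μ hb i)) (Sm.sum fun i _ => ?_)
  exact Sm.div_sq (Sm.add (hf.const_mul _) ((hf.rop i).const_mul _)) i

lemma Sm.j3 (hf : Sm f) (μ : Fin N → ℝ) (hb : ℝ) : Sm (J3N μ hb f) := by
  refine Sm.sub (Sm.sum fun i _ => (Sm.coord i).mul (hf.pop μ hb i)) ?_
  exact (Sm.add (hf.const_mul _) (Sm.sum fun i _ => (hf.rop i).const_mul _)).const_mul _
-- ## Dunkl derivative of J₊ f

lemma Sm.sumDD (hf : Sm f) (μ : Fin N → ℝ) :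
    Sm (fun y => ∑ j, Dop μ j (Dop μ j f) y) :=
  Sm.sum fun j _ => (hf.dop μ j).dop μ j

lemma Sm.bg (hf : Sm f) (β γ : Fin N → ℝ) (j : Fin N) :
    Sm (fun y => ((β j : ℂ) * f y + (γ j : ℂ) * f (flipC j y)) / ((y j : ℝ) : ℂ) ^ 2) :=
  Sm.div_sq (Sm.add (hf.const_mul _) ((hf.flip j).const_mul _)) j

lemma DJp (hf : Sm f) (hx : x ∈ Udom N) (μ : Fin N → ℝ) (i : Fin N) :
    Dop μ i (JpN μ β γ hb f) x
      = (Complex.I * (hb : ℂ)) ^ 2 * ∑ j, Dop μ i (Dop μ j (Dop μ j f)) x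
        + ∑ j, (((β j : ℂ) * Dop μ i f x
            + (γ j : ℂ) * ((if i = j then (-1 : ℂ) else 1) * Dop μ i f (flipC j x)))
          / ((x j : ℝ) : ℂ) ^ 2)
        - 2 * (((β i : ℂ) * f x + (γ i : ℂ) * f (flipC i x)) / ((x i : ℝ) : ℂ) ^ 3) := by
  have e0 : Dop μ i (JpN μ β γ hb f) x
      = Dop μ i (fun y => (Complex.I * (hb : ℂ)) ^ 2 * (∑ j, Dop μ j (Dop μ j f) y)
          + ∑ j, ((β j : ℂ) * f y + (γ j : ℂ) * f (flipC j y)) / ((y j : ℝ) : ℂ) ^ 2) x := by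
    apply Dop_congr (fun y hy => ?_) hx
    exact JpN_apply hf hy μ
  rw [e0, Dop_add (((hf.sumDD μ).const_mul _).diffAt hx)
      ((Sm.sum (fun j _ => hf.bg β γ j)).diffAt hx),
    Dop_const_mul ((hf.sumDD μ).diffAt hx),
    Dop_sum (fun j _ => (((hf.dop μ j).dop μ j)).diffAt hx),
    Dop_sum (fun j _ => (hf.bg β γ j).diffAt hx)]
  have hj : ∀ j ∈ Finset.univ,
      Dop μ i (fun y => ((β j : ℂ) * f y + (γ j : ℂ) * f (flipC j y)) / ((y j : ℝ) : ℂ) ^ 2) x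
        = ((β j : ℂ) * Dop μ i f x
            + (γ j : ℂ) * ((if i = j then (-1 : ℂ) else 1) * Dop μ i f (flipC j x)))
              / ((x j : ℝ) : ℂ) ^ 2
          - (if j = i
              then 2 * (((β i : ℂ) * f x + (γ i : ℂ) * f (flipC i x)) / ((x i : ℝ) : ℂ) ^ 3)
              else 0) := by
    intro j _
    rw [Dop_div_sq ((Sm.add (hf.const_mul _) ((hf.flip j).const_mul _)).diffAt hx) hx j,
      Dop_add ((hf.const_mul _).diffAt hx) (((hf.flip j).const_mul _).diffAt hx),
      Dop_const_mul (hf.diffAt hx), Dop_const_mul ((hf.flip j).diffAt hx),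
      Dop_flip_if hf hx μ i j]
    rcases eq_or_ne j i with rfl | hji
    · rw [if_pos rfl, if_pos rfl]
      simp only [if_true]
      field_simp
    · simp only [if_neg hji, if_neg (Ne.symm hji)]
  rw [Finset.sum_congr rfl hj, Finset.sum_sub_distrib, Finset.sum_ite_eq' Finset.univ i]
  simp only [Finset.mem_univ, if_pos]
  ring

lemma Jp_flip (hf : Sm f) (hx : x ∈ Udom N) (μ : Fin N → ℝ) (i : Fin N) :
    JpN μ β γ hb f (flipC i x)
      = (Complex.I * (hb : ℂ)) ^ 2 * ∑ j, Dop μ j (Dop μ j f) (flipC i x)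
        + ∑ j, ((β j : ℂ) * f (flipC i x) + (γ j : ℂ) * f (flipC j (flipC i x)))
            / ((x j : ℝ) : ℂ) ^ 2 := by
  rw [JpN_apply hf (flipC_mem_Udom hx) μ]
  congr 1
  apply Finset.sum_congr rfl
  intro j _
  rw [coord_sq_flip]
-- ## sign helper

def sg (a b : Fin N) : ℂ := if a = b then -1 else 1

lemma sg_self (a : Fin N) : sg a a = -1 := if_pos rfl

lemma sg_ne {a b : Fin N} (h : a ≠ b) : sg a b = 1 := if_neg h

lemma sg_comm (a b : Fin N) : sg a b = sg b a := by
  unfold sg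
  rcases eq_or_ne a b with rfl | h
  · rfl
  · rw [if_neg h, if_neg (Ne.symm h)]

lemma sg_mul_self (a b : Fin N) : sg a b * sg a b = 1 := by
  unfold sg
  rcases eq_or_ne a b with rfl | h
  · norm_num
  · rw [if_neg h]; norm_num

lemma Dop_flip_sg (hg : Sm g) (hx : x ∈ Udom N) (μ : Fin N → ℝ) (i j : Fin N) :
    Dop μ i (fun y => g (flipC j y)) x = sg i j * Dop μ i g (flipC j x) := by
  rw [Dop_flip_if hg hx μ i j]; rfl

lemma Dop_pop (hf : Sm f) (hy : x ∈ Udom N) (μ : Fin N → ℝ) (hb : ℝ) (i j : Fin N) :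
    Dop μ j (Pop μ hb i f) x = -(Complex.I * (hb : ℂ)) * Dop μ j (Dop μ i f) x :=
  Dop_const_mul ((hf.dop μ i).diffAt hy) _

lemma Dop_comm' (hf : Sm f) (hx : x ∈ Udom N) (μ : Fin N → ℝ) (i j : Fin N) :
    Dop μ j (Dop μ i f) x = Dop μ i (Dop μ j f) x := by
  rcases eq_or_ne j i with rfl | h
  · rfl
  · exact Dop_comm hf hx h

/-- First Dunkl derivative of `J₃ f`, valid on all of `U`. -/
lemma DJ3 (hf : Sm f) (μ : Fin N → ℝ) (hb : ℝ) (j : Fin N) {y : Fin N → ℝ}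
    (hy : y ∈ Udom N) :
    Dop μ j (J3N μ hb f) y
      = ∑ i, ((y i : ℝ) : ℂ) * (-(Complex.I * (hb : ℂ)) * Dop μ i (Dop μ j f) y)
        + (-(Complex.I * (hb : ℂ)))
            * (Dop μ j f y + 2 * ((μ j : ℂ) * Dop μ j f (flipC j y)))
        - Complex.I * (hb : ℂ) * ((N : ℂ) / 2 * Dop μ j f y
            + ∑ i, (μ i : ℂ) * (sg j i * Dop μ j f (flipC i y))) := by
  have e0 : Dop μ j (J3N μ hb f) y
      = Dop μ j (fun z => (∑ i, ((z i : ℝ) : ℂ) * Pop μ hb i f z)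
          - Complex.I * (hb : ℂ) * ((N : ℂ) / 2 * f z
            + ∑ i, (μ i : ℂ) * Rop i f z)) y := rfl
  have hsmA : ∀ i : Fin N, Sm (fun z => ((z i : ℝ) : ℂ) * Pop μ hb i f z) :=
    fun i => (Sm.coord i).mul (hf.pop μ hb i)
  have hsmB : Sm (fun z => (N : ℂ) / 2 * f z + ∑ i, (μ i : ℂ) * Rop i f z) :=
    Sm.add (hf.const_mul _) (Sm.sum fun i _ => (hf.rop i).const_mul _)
  rw [e0, Dop_sub ((Sm.sum fun i _ => hsmA i).diffAt hy) ((hsmB.const_mul _).diffAt hy),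
    Dop_sum (fun i _ => (hsmA i).diffAt hy),
    Dop_const_mul (hsmB.diffAt hy),
    Dop_add ((hf.const_mul _).diffAt hy)
      ((Sm.sum fun i _ => (hf.rop i).const_mul _).diffAt hy),
    Dop_const_mul (hf.diffAt hy),
    Dop_sum (fun i _ => ((hf.rop i).const_mul _).diffAt hy)]
  have hA : ∀ i ∈ Finset.univ,
      Dop μ j (fun z => ((z i : ℝ) : ℂ) * Pop μ hb i f z) y
        = ((y i : ℝ) : ℂ) * (-(Complex.I * (hb : ℂ)) * Dop μ i (Dop μ j f) y)
          + (if i = j then Pop μ hb i f y + 2 * (μ j : ℂ) * Pop μ hb i f (flipC j y)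
             else 0) := by
    intro i _
    rw [Dop_coord_mul ((hf.pop μ hb i).diffAt hy) hy i,
      Dop_pop hf hy μ hb i j, Dop_comm' hf hy μ i j]
  have hB : ∀ i ∈ Finset.univ,
      Dop μ j (fun z => (μ i : ℂ) * Rop i f z) y
        = (μ i : ℂ) * (sg j i * Dop μ j f (flipC i y)) := by
    intro i _
    rw [Dop_const_mul ((hf.rop i).diffAt hy)]
    congr 1
    exact Dop_flip_sg hf hy μ j i
  rw [Finset.sum_congr rfl hA, Finset.sum_congr rfl hB, Finset.sum_add_distrib,
    Finset.sum_ite_eq' Finset.univ j]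
  simp only [Finset.mem_univ, if_pos]
  have hp1 : Pop μ hb j f y = -(Complex.I * (hb : ℂ)) * Dop μ j f y := rfl
  have hp2 : Pop μ hb j f (flipC j y) = -(Complex.I * (hb : ℂ)) * Dop μ j f (flipC j y) := rfl
  rw [hp1, hp2]
  ring

/-- Second Dunkl derivative of `J₃ f`. -/
lemma DDJ3 (hf : Sm f) (hx : x ∈ Udom N) (μ : Fin N → ℝ) (hb : ℝ) (j : Fin N) :
    Dop μ j (Dop μ j (J3N μ hb f)) x
      = -(Complex.I * (hb : ℂ)) * ∑ i, ((x i : ℝ) : ℂ) * Dop μ i (Dop μ j (Dop μ j f)) x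
        - Complex.I * (hb : ℂ) * ((2 : ℂ) + (N : ℂ) / 2) * Dop μ j (Dop μ j f) x
        - Complex.I * (hb : ℂ) * ∑ i, (μ i : ℂ) * Dop μ j (Dop μ j f) (flipC i x) := by
  have hsmA : ∀ i : Fin N,
      Sm (fun y => ((y i : ℝ) : ℂ) * (-(Complex.I * (hb : ℂ)) * Dop μ i (Dop μ j f) y)) :=
    fun i => (Sm.coord i).mul (((hf.dop μ j).dop μ i).const_mul _)
  have hsmB : Sm (fun y => Dop μ j f y + 2 * ((μ j : ℂ) * Dop μ j f (flipC j y))) :=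
    Sm.add (hf.dop μ j) ((((hf.dop μ j).flip j).const_mul _).const_mul 2)
  have hsmC : Sm (fun y => (N : ℂ) / 2 * Dop μ j f y
      + ∑ i, (μ i : ℂ) * (sg j i * Dop μ j f (flipC i y))) :=
    Sm.add ((hf.dop μ j).const_mul _)
      (Sm.sum fun i _ => (((hf.dop μ j).flip i).const_mul _).const_mul _)
  have e0 : Dop μ j (Dop μ j (J3N μ hb f)) x
      = Dop μ j (fun y =>
          (∑ i, ((y i : ℝ) : ℂ) * (-(Complex.I * (hb : ℂ)) * Dop μ i (Dop μ j f) y)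
            + (-(Complex.I * (hb : ℂ)))
                * (Dop μ j f y + 2 * ((μ j : ℂ) * Dop μ j f (flipC j y))))
          - Complex.I * (hb : ℂ) * ((N : ℂ) / 2 * Dop μ j f y
              + ∑ i, (μ i : ℂ) * (sg j i * Dop μ j f (flipC i y)))) x := by
    apply Dop_congr (fun y hy => ?_) hx
    rw [DJ3 hf μ hb j hy]
  rw [e0, Dop_sub (((Sm.sum fun i _ => hsmA i).add (hsmB.const_mul _)).diffAt hx)
      ((hsmC.const_mul _).diffAt hx),
    Dop_add ((Sm.sum fun i _ => hsmA i).diffAt hx) ((hsmB.const_mul _).diffAt hx),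
    Dop_sum (fun i _ => (hsmA i).diffAt hx),
    Dop_const_mul (hsmB.diffAt hx),
    Dop_add ((hf.dop μ j).diffAt hx)
      (((((hf.dop μ j).flip j).const_mul _).const_mul 2).diffAt hx),
    Dop_const_mul ((((hf.dop μ j).flip j).const_mul _).diffAt hx),
    Dop_const_mul (((hf.dop μ j).flip j).diffAt hx),
    Dop_flip_sg (hf.dop μ j) hx μ j j,
    Dop_const_mul (hsmC.diffAt hx),
    Dop_add (((hf.dop μ j).const_mul _).diffAt hx)
      ((Sm.sum fun i _ => (((hf.dop μ j).flip i).const_mul _).const_mul _).diffAt hx),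
    Dop_const_mul ((hf.dop μ j).diffAt hx),
    Dop_sum (fun i _ => ((((hf.dop μ j).flip i).const_mul _).const_mul _).diffAt hx)]
  have hA : ∀ i ∈ Finset.univ,
      Dop μ j (fun y => ((y i : ℝ) : ℂ)
          * (-(Complex.I * (hb : ℂ)) * Dop μ i (Dop μ j f) y)) x
        = ((x i : ℝ) : ℂ) * (-(Complex.I * (hb : ℂ)) * Dop μ i (Dop μ j (Dop μ j f)) x)
          + (if i = j then
              -(Complex.I * (hb : ℂ)) * Dop μ i (Dop μ j f) x
                + 2 * (μ j : ℂ)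
                  * (-(Complex.I * (hb : ℂ)) * Dop μ i (Dop μ j f) (flipC j x))
             else 0) := by
    intro i _
    rw [Dop_coord_mul ((((hf.dop μ j).dop μ i).const_mul _).diffAt hx) hx i,
      Dop_const_mul (((hf.dop μ j).dop μ i).diffAt hx)]
    have hw : Dop μ j (Dop μ i (Dop μ j f)) x = Dop μ i (Dop μ j (Dop μ j f)) x := by
      rcases eq_or_ne i j with rfl | hij
      · rfl
      · exact Dop_comm (hf.dop μ j) hx (Ne.symm hij)
    rw [hw]
  have hC : ∀ i ∈ Finset.univ,
      Dop μ j (fun y => (μ i : ℂ) * (sg j i * Dop μ j f (flipC i y))) x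
        = (μ i : ℂ) * Dop μ j (Dop μ j f) (flipC i x) := by
    intro i _
    rw [Dop_const_mul ((((hf.dop μ j).flip i).const_mul _).diffAt hx),
      Dop_const_mul (((hf.dop μ j).flip i).diffAt hx),
      Dop_flip_sg (hf.dop μ j) hx μ j i]
    rw [show sg j i * (sg j i * Dop μ j (Dop μ j f) (flipC i x))
        = (sg j i * sg j i) * Dop μ j (Dop μ j f) (flipC i x) from by ring,
      sg_mul_self]
    ring
  rw [Finset.sum_congr rfl hA, Finset.sum_congr rfl hC, Finset.sum_add_distrib,
    Finset.sum_ite_eq' Finset.univ j]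
  simp only [Finset.mem_univ, if_pos, sg_self]
  have hpull : ∑ i, ((x i : ℝ) : ℂ)
        * (-(Complex.I * (hb : ℂ)) * Dop μ i (Dop μ j (Dop μ j f)) x)
      = -(Complex.I * (hb : ℂ))
        * ∑ i, ((x i : ℝ) : ℂ) * Dop μ i (Dop μ j (Dop μ j f)) x := by
    rw [Finset.mul_sum]
    exact Finset.sum_congr rfl (fun i _ => by ring)
  rw [hpull]
  ring
-- ## J₃ at a reflected point

lemma J3_flip (hf : Sm f) (hx : x ∈ Udom N) (μ : Fin N → ℝ) (j : Fin N) :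
    J3N μ hb f (flipC j x)
      = ∑ i, ((if i = j then (-1 : ℂ) else 1) * ((x i : ℝ) : ℂ))
            * (-(Complex.I * (hb : ℂ)) * Dop μ i f (flipC j x))
        - Complex.I * (hb : ℂ) * ((N : ℂ) / 2 * f (flipC j x)
            + ∑ i, (μ i : ℂ) * f (flipC i (flipC j x))) := by
  rw [J3N_apply μ f (flipC j x)]
  congr 1
  apply Finset.sum_congr rfl
  intro i _
  have hco : ((flipC j x i : ℝ) : ℂ) = (if i = j then (-1 : ℂ) else 1) * ((x i : ℝ) : ℂ) := by
    rcases eq_or_ne i j with rfl | hij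
    · rw [flipC_self, if_pos rfl]; push_cast; ring
    · rw [flipC_other hij, if_neg hij, one_mul]
  rw [hco]

/-- Part 2. -/
lemma part2 (μ : Fin N → ℝ) (hf : Sm f) (hx : x ∈ Udom N) :
    J3N μ hb (JpN μ β γ hb f) x - JpN μ β γ hb (J3N μ hb f) x
      = 2 * Complex.I * (hb : ℂ) * JpN μ β γ hb f x := by
  have hpull : ∀ (g : Fin N → ℂ),
      ∑ i, ((x i : ℝ) : ℂ) * (-(Complex.I * (hb : ℂ)) * g i)
        = -(Complex.I * (hb : ℂ)) * ∑ i, ((x i : ℝ) : ℂ) * g i := by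
    intro g
    rw [Finset.mul_sum]
    exact Finset.sum_congr rfl (fun i _ => by ring)
  have hpull2 : ∀ (j : Fin N) (g : Fin N → ℂ),
      ∑ i, ((if i = j then (-1 : ℂ) else 1) * ((x i : ℝ) : ℂ))
          * (-(Complex.I * (hb : ℂ)) * g i)
        = -(Complex.I * (hb : ℂ))
            * ∑ i, ((if i = j then (-1 : ℂ) else 1) * ((x i : ℝ) : ℂ)) * g i := by
    intro j g
    rw [Finset.mul_sum]
    exact Finset.sum_congr rfl (fun i _ => by ring)
  -- L1 : the x·π part applied to J₊ f
  have hL1 : ∑ i, ((x i : ℝ) : ℂ)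
        * (-(Complex.I * (hb : ℂ)) * Dop μ i (JpN μ β γ hb f) x)
      = -((Complex.I * (hb : ℂ)) ^ 3)
          * ∑ i, (((x i : ℝ) : ℂ) * ∑ j, Dop μ i (Dop μ j (Dop μ j f)) x)
        - (Complex.I * (hb : ℂ))
          * ∑ i, (((x i : ℝ) : ℂ) * ∑ j, (((β j : ℂ) * Dop μ i f x
              + (γ j : ℂ) * ((if i = j then (-1 : ℂ) else 1) * Dop μ i f (flipC j x)))
            / ((x j : ℝ) : ℂ) ^ 2))
        + 2 * (Complex.I * (hb : ℂ))
          * ∑ i, (((β i : ℂ) * f x + (γ i : ℂ) * f (flipC i x)) / ((x i : ℝ) : ℂ) ^ 2) := by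
    have hper : ∀ i ∈ Finset.univ, ((x i : ℝ) : ℂ)
          * (-(Complex.I * (hb : ℂ)) * Dop μ i (JpN μ β γ hb f) x)
        = -((Complex.I * (hb : ℂ)) ^ 3)
            * (((x i : ℝ) : ℂ) * ∑ j, Dop μ i (Dop μ j (Dop μ j f)) x)
          - (Complex.I * (hb : ℂ))
            * (((x i : ℝ) : ℂ) * ∑ j, (((β j : ℂ) * Dop μ i f x
                + (γ j : ℂ) * ((if i = j then (-1 : ℂ) else 1) * Dop μ i f (flipC j x)))
              / ((x j : ℝ) : ℂ) ^ 2))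
          + 2 * (Complex.I * (hb : ℂ))
            * (((β i : ℂ) * f x + (γ i : ℂ) * f (flipC i x)) / ((x i : ℝ) : ℂ) ^ 2) := by
      intro i _
      rw [DJp hf hx μ i]
      have hxi : ((x i : ℝ) : ℂ) ≠ 0 := Sm.coord_ne hx
      field_simp
      ring_nf
      simp only [mul_comm (Dop μ i f x)]
    rw [Finset.sum_congr rfl hper, Finset.sum_add_distrib, Finset.sum_sub_distrib,
      ← Finset.mul_sum, ← Finset.mul_sum, ← Finset.mul_sum]
  -- L2 : J₊ f at reflected points
  have hL2 : ∑ i, (μ i : ℂ) * JpN μ β γ hb f (flipC i x)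
      = (Complex.I * (hb : ℂ)) ^ 2
          * ∑ i, ((μ i : ℂ) * ∑ j, Dop μ j (Dop μ j f) (flipC i x))
        + ∑ i, ((μ i : ℂ) * ∑ j, ((β j : ℂ) * f (flipC i x)
            + (γ j : ℂ) * f (flipC j (flipC i x))) / ((x j : ℝ) : ℂ) ^ 2) := by
    have hper : ∀ i ∈ Finset.univ, (μ i : ℂ) * JpN μ β γ hb f (flipC i x)
        = (Complex.I * (hb : ℂ)) ^ 2
            * ((μ i : ℂ) * ∑ j, Dop μ j (Dop μ j f) (flipC i x))
          + (μ i : ℂ) * ∑ j, ((β j : ℂ) * f (flipC i x)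
              + (γ j : ℂ) * f (flipC j (flipC i x))) / ((x j : ℝ) : ℂ) ^ 2 := by
      intro i _
      rw [Jp_flip hf hx μ i]
      ring
    rw [Finset.sum_congr rfl hper, Finset.sum_add_distrib, ← Finset.mul_sum]
  -- R1 : π² applied to J₃ f
  have hR1 : ∑ j, Dop μ j (Dop μ j (J3N μ hb f)) x
      = -(Complex.I * (hb : ℂ))
          * ∑ j, (∑ i, ((x i : ℝ) : ℂ) * Dop μ i (Dop μ j (Dop μ j f)) x)
        - Complex.I * (hb : ℂ) * ((2 : ℂ) + (N : ℂ) / 2)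
          * ∑ j, Dop μ j (Dop μ j f) x
        - Complex.I * (hb : ℂ)
          * ∑ j, (∑ i, (μ i : ℂ) * Dop μ j (Dop μ j f) (flipC i x)) := by
    rw [Finset.sum_congr rfl (fun j _ => DDJ3 hf hx μ hb j), Finset.sum_sub_distrib,
      Finset.sum_sub_distrib, ← Finset.mul_sum, ← Finset.mul_sum, ← Finset.mul_sum]
  -- sum swaps
  have hswapW : ∑ j, (∑ i, ((x i : ℝ) : ℂ) * Dop μ i (Dop μ j (Dop μ j f)) x)
      = ∑ i, (((x i : ℝ) : ℂ) * ∑ j, Dop μ i (Dop μ j (Dop μ j f)) x) := by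
    rw [Finset.sum_comm]
    exact Finset.sum_congr rfl (fun i _ => (Finset.mul_sum _ _ _).symm)
  have hswapM : ∑ j, (∑ i, (μ i : ℂ) * Dop μ j (Dop μ j f) (flipC i x))
      = ∑ i, ((μ i : ℂ) * ∑ j, Dop μ j (Dop μ j f) (flipC i x)) := by
    rw [Finset.sum_comm]
    exact Finset.sum_congr rfl (fun i _ => (Finset.mul_sum _ _ _).symm)
  -- values of J₃ f
  have hKx : J3N μ hb f x
      = -(Complex.I * (hb : ℂ)) * (∑ i, ((x i : ℝ) : ℂ) * Dop μ i f x)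
        - Complex.I * (hb : ℂ) * ((N : ℂ) / 2 * f x
            + ∑ i, (μ i : ℂ) * f (flipC i x)) := by
    rw [J3N_apply μ f x, hpull (fun i => Dop μ i f x)]
  have hKσ : ∀ j : Fin N, J3N μ hb f (flipC j x)
      = -(Complex.I * (hb : ℂ))
          * (∑ i, ((if i = j then (-1 : ℂ) else 1) * ((x i : ℝ) : ℂ))
              * Dop μ i f (flipC j x))
        - Complex.I * (hb : ℂ) * ((N : ℂ) / 2 * f (flipC j x)
            + ∑ i, (μ i : ℂ) * f (flipC i (flipC j x))) := by
    intro j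
    rw [J3_flip hf hx μ j, hpull2 j (fun i => Dop μ i f (flipC j x))]
  -- R2 : the β γ part applied to J₃ f
  have hR2 : ∑ j, ((β j : ℂ) * J3N μ hb f x + (γ j : ℂ) * J3N μ hb f (flipC j x))
        / ((x j : ℝ) : ℂ) ^ 2
      = -(Complex.I * (hb : ℂ))
          * ∑ j, ((β j : ℂ) * (∑ i, ((x i : ℝ) : ℂ) * Dop μ i f x)
              / ((x j : ℝ) : ℂ) ^ 2)
        - (Complex.I * (hb : ℂ))
          * ∑ j, ((γ j : ℂ) * (∑ i, ((if i = j then (-1 : ℂ) else 1) * ((x i : ℝ) : ℂ))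
                * Dop μ i f (flipC j x)) / ((x j : ℝ) : ℂ) ^ 2)
        - Complex.I * (hb : ℂ) * ((N : ℂ) / 2)
          * ∑ j, (((β j : ℂ) * f x + (γ j : ℂ) * f (flipC j x)) / ((x j : ℝ) : ℂ) ^ 2)
        - Complex.I * (hb : ℂ)
          * ∑ j, (((β j : ℂ) * (∑ i, (μ i : ℂ) * f (flipC i x))
              + (γ j : ℂ) * (∑ i, (μ i : ℂ) * f (flipC i (flipC j x))))
            / ((x j : ℝ) : ℂ) ^ 2) := by
    have hper : ∀ j ∈ Finset.univ,
        ((β j : ℂ) * J3N μ hb f x + (γ j : ℂ) * J3N μ hb f (flipC j x))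
            / ((x j : ℝ) : ℂ) ^ 2
          = -(Complex.I * (hb : ℂ))
              * ((β j : ℂ) * (∑ i, ((x i : ℝ) : ℂ) * Dop μ i f x)
                  / ((x j : ℝ) : ℂ) ^ 2)
            - (Complex.I * (hb : ℂ))
              * ((γ j : ℂ) * (∑ i, ((if i = j then (-1 : ℂ) else 1) * ((x i : ℝ) : ℂ))
                    * Dop μ i f (flipC j x)) / ((x j : ℝ) : ℂ) ^ 2)
            - Complex.I * (hb : ℂ) * ((N : ℂ) / 2)
              * (((β j : ℂ) * f x + (γ j : ℂ) * f (flipC j x)) / ((x j : ℝ) : ℂ) ^ 2)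
            - Complex.I * (hb : ℂ)
              * (((β j : ℂ) * (∑ i, (μ i : ℂ) * f (flipC i x))
                  + (γ j : ℂ) * (∑ i, (μ i : ℂ) * f (flipC i (flipC j x))))
                / ((x j : ℝ) : ℂ) ^ 2) := by
      intro j _
      rw [hKx, hKσ j]
      ring
    rw [Finset.sum_congr rfl hper, Finset.sum_sub_distrib, Finset.sum_sub_distrib,
      Finset.sum_sub_distrib, ← Finset.mul_sum, ← Finset.mul_sum, ← Finset.mul_sum,
      ← Finset.mul_sum]
  -- cross-term matching
  have hcross : ∑ i, (((x i : ℝ) : ℂ) * ∑ j, (((β j : ℂ) * Dop μ i f x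
          + (γ j : ℂ) * ((if i = j then (-1 : ℂ) else 1) * Dop μ i f (flipC j x)))
        / ((x j : ℝ) : ℂ) ^ 2))
      = ∑ j, ((β j : ℂ) * (∑ i, ((x i : ℝ) : ℂ) * Dop μ i f x) / ((x j : ℝ) : ℂ) ^ 2)
        + ∑ j, ((γ j : ℂ) * (∑ i, ((if i = j then (-1 : ℂ) else 1) * ((x i : ℝ) : ℂ))
              * Dop μ i f (flipC j x)) / ((x j : ℝ) : ℂ) ^ 2) := by
    have h1 : ∀ i ∈ Finset.univ, (((x i : ℝ) : ℂ) * ∑ j, (((β j : ℂ) * Dop μ i f x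
            + (γ j : ℂ) * ((if i = j then (-1 : ℂ) else 1) * Dop μ i f (flipC j x)))
          / ((x j : ℝ) : ℂ) ^ 2))
        = ∑ j, (((x i : ℝ) : ℂ) * (((β j : ℂ) * Dop μ i f x
            + (γ j : ℂ) * ((if i = j then (-1 : ℂ) else 1) * Dop μ i f (flipC j x)))
          / ((x j : ℝ) : ℂ) ^ 2)) := by
      intro i _
      exact Finset.mul_sum _ _ _
    rw [Finset.sum_congr rfl h1, Finset.sum_comm, ← Finset.sum_add_distrib]
    apply Finset.sum_congr rfl
    intro j _
    have h2 : ∀ i ∈ Finset.univ, ((x i : ℝ) : ℂ) * (((β j : ℂ) * Dop μ i f x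
          + (γ j : ℂ) * ((if i = j then (-1 : ℂ) else 1) * Dop μ i f (flipC j x)))
        / ((x j : ℝ) : ℂ) ^ 2)
        = (β j : ℂ) / ((x j : ℝ) : ℂ) ^ 2 * (((x i : ℝ) : ℂ) * Dop μ i f x)
          + (γ j : ℂ) / ((x j : ℝ) : ℂ) ^ 2
              * (((if i = j then (-1 : ℂ) else 1) * ((x i : ℝ) : ℂ))
                * Dop μ i f (flipC j x)) := by
      intro i _
      ring
    rw [Finset.sum_congr rfl h2, Finset.sum_add_distrib, ← Finset.mul_sum, ← Finset.mul_sum]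
    ring
  -- μ–βγ matching
  have hMB : ∑ i, ((μ i : ℂ) * ∑ j, ((β j : ℂ) * f (flipC i x)
          + (γ j : ℂ) * f (flipC j (flipC i x))) / ((x j : ℝ) : ℂ) ^ 2)
      = ∑ j, (((β j : ℂ) * (∑ i, (μ i : ℂ) * f (flipC i x))
          + (γ j : ℂ) * (∑ i, (μ i : ℂ) * f (flipC i (flipC j x))))
        / ((x j : ℝ) : ℂ) ^ 2) := by
    have h1 : ∀ i ∈ Finset.univ, ((μ i : ℂ) * ∑ j, ((β j : ℂ) * f (flipC i x)
            + (γ j : ℂ) * f (flipC j (flipC i x))) / ((x j : ℝ) : ℂ) ^ 2)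
        = ∑ j, ((μ i : ℂ) * (((β j : ℂ) * f (flipC i x)
            + (γ j : ℂ) * f (flipC j (flipC i x))) / ((x j : ℝ) : ℂ) ^ 2)) := by
      intro i _
      exact Finset.mul_sum _ _ _
    rw [Finset.sum_congr rfl h1, Finset.sum_comm]
    apply Finset.sum_congr rfl
    intro j _
    have h2 : ∀ i ∈ Finset.univ, ((μ i : ℂ) * (((β j : ℂ) * f (flipC i x)
          + (γ j : ℂ) * f (flipC j (flipC i x))) / ((x j : ℝ) : ℂ) ^ 2))
        = (β j : ℂ) / ((x j : ℝ) : ℂ) ^ 2 * ((μ i : ℂ) * f (flipC i x))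
          + (γ j : ℂ) / ((x j : ℝ) : ℂ) ^ 2
              * ((μ i : ℂ) * f (flipC i (flipC j x))) := by
      intro i _
      rw [flipC_comm j i]
      ring
    rw [Finset.sum_congr rfl h2, Finset.sum_add_distrib, ← Finset.mul_sum, ← Finset.mul_sum]
    ring
  -- assemble
  have hJ3G : J3N μ hb (JpN μ β γ hb f) x
      = ∑ i, ((x i : ℝ) : ℂ)
          * (-(Complex.I * (hb : ℂ)) * Dop μ i (JpN μ β γ hb f) x)
        - Complex.I * (hb : ℂ) * ((N : ℂ) / 2 * JpN μ β γ hb f x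
            + ∑ i, (μ i : ℂ) * JpN μ β γ hb f (flipC i x)) := J3N_apply μ _ x
  have hJpK : JpN μ β γ hb (J3N μ hb f) x
      = (Complex.I * (hb : ℂ)) ^ 2 * ∑ j, Dop μ j (Dop μ j (J3N μ hb f)) x
        + ∑ j, ((β j : ℂ) * J3N μ hb f x + (γ j : ℂ) * J3N μ hb f (flipC j x))
            / ((x j : ℝ) : ℂ) ^ 2 := JpN_apply (hf.j3 μ hb) hx μ
  rw [hJ3G, hJpK, hL1, hL2, hR1, hR2, hswapW, hswapM, hcross, hMB,
    JpN_apply hf hx μ]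
  ring

/-- The `N`-dimensional Dunkl realization satisfies the `sl(2,ℝ)` commutation relations. -/
theorem dunkl_sl2_realization_ND (N : ℕ) (hN : 1 ≤ N) (μ β γ : Fin N → ℝ)
    (hb : ℝ) (hbpos : hb > 0)
    (f : (Fin N → ℝ) → ℂ) (hf : ContDiffOn ℝ (⊤ : ℕ∞) f (Udom N)) :
    ∀ x ∈ Udom N,
      (JmN (JpN μ β γ hb f) x - JpN μ β γ hb (JmN f) x
          = 4 * Complex.I * (hb : ℂ) * J3N μ hb f x) ∧
      (J3N μ hb (JpN μ β γ hb f) x - JpN μ β γ hb (J3N μ hb f) x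
          = 2 * Complex.I * (hb : ℂ) * JpN μ β γ hb f x) ∧
      (J3N μ hb (JmN f) x - JmN (J3N μ hb f) x
          = -(2 * Complex.I * (hb : ℂ)) * JmN f x) := by
  intro x hx
  have hf' : Sm f := hf.of_le (by simp)
  exact ⟨part1 μ hf' hx, part2 μ hf' hx, part3 μ hf' hx⟩

end
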